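/- arXiv:1310.8483 — 2 statements merged into one kernel-verified Lean document; each statement's English description precedes it below -/
import Mathlib

section
/- Let A be a finite-dimensional involutory Hopf algebra over ℂ with n = dim_ℂ A, and let B : A⊗A⊗A⊗A → A⊗A⊗A⊗A be the plaquette operator B(x₁ ⊗ x₂ ⊗ x₃ ⊗ x₄) = ∑ χ(x₁₍₁₎·x₂₍₁₎·x₃₍₁₎·x₄₍₁₎) · (x₁₍₂₎ ⊗ x₂₍₂₎ ⊗ x₃₍₂₎ ⊗ x₄₍₂₎). Then for every integer k ≥ 1, Bᵏ = n^{k−1}·B; in particular B ∘ B = n·B. -/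
/-!
STATEMENT 5: For a finite-dimensional involutory Hopf algebra A over ℂ with n = dim_ℂ A,
the plaquette operator B on A⊗A⊗A⊗A,
  B(x₁ ⊗ x₂ ⊗ x₃ ⊗ x₄) = ∑ χ(x₁₍₁₎x₂₍₁₎x₃₍₁₎x₄₍₁₎) x₁₍₂₎ ⊗ x₂₍₂₎ ⊗ x₃₍₂₎ ⊗ x₄₍₂₎,
satisfies Bᵏ = n^{k−1}·B for every k ≥ 1; in particular B ∘ B = n·B.
-/

open HopfAlgebra TensorProduct

noncomputable section

/-- The trace character of the left regular representation. -/
def traceChar (A : Type*) [Ring A] [Algebra ℂ A] : A →ₗ[ℂ] ℂ :=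
  (LinearMap.trace ℂ A) ∘ₗ (LinearMap.mul ℂ A)

variable (A : Type*) [Ring A] [HopfAlgebra ℂ A]

/-- The fourfold tensor product A⊗A⊗A⊗A. -/
abbrev T4 := A ⊗[ℂ] (A ⊗[ℂ] (A ⊗[ℂ] A))

/-- `(a ⊗ b) ⊗ (c ⊗ t) ↦ (a*c) ⊗ (b ⊗ t)`: multiply the first (Sweedler) legs and
collect the second legs. -/
def mulStep (N : Type*) [AddCommGroup N] [Module ℂ N] :
    ((A ⊗[ℂ] A) ⊗[ℂ] (A ⊗[ℂ] N)) →ₗ[ℂ] (A ⊗[ℂ] (A ⊗[ℂ] N)) :=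
  (TensorProduct.map (LinearMap.mul' ℂ A) LinearMap.id) ∘ₗ
    (TensorProduct.tensorTensorTensorComm ℂ A A A N).toLinearMap

/-- Comultiplication of each of the four tensor factors. -/
def comul4 : T4 A →ₗ[ℂ]
    ((A ⊗[ℂ] A) ⊗[ℂ] ((A ⊗[ℂ] A) ⊗[ℂ] ((A ⊗[ℂ] A) ⊗[ℂ] (A ⊗[ℂ] A)))) :=
  TensorProduct.map (Coalgebra.comul (R := ℂ))
    (TensorProduct.map (Coalgebra.comul (R := ℂ))
      (TensorProduct.map (Coalgebra.comul (R := ℂ)) (Coalgebra.comul (R := ℂ))))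

/-- The plaquette operator
`B(x₁ ⊗ x₂ ⊗ x₃ ⊗ x₄) = ∑ χ(x₁₍₁₎x₂₍₁₎x₃₍₁₎x₄₍₁₎) x₁₍₂₎ ⊗ x₂₍₂₎ ⊗ x₃₍₂₎ ⊗ x₄₍₂₎`. -/
def plaquetteOp : T4 A →ₗ[ℂ] T4 A :=
  (TensorProduct.lid ℂ (T4 A)).toLinearMap
    ∘ₗ (LinearMap.rTensor (T4 A) (traceChar A))
    ∘ₗ (mulStep A (A ⊗[ℂ] (A ⊗[ℂ] A)))
    ∘ₗ (LinearMap.lTensor (A ⊗[ℂ] A) (mulStep A (A ⊗[ℂ] A)))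
    ∘ₗ (LinearMap.lTensor (A ⊗[ℂ] A) (LinearMap.lTensor (A ⊗[ℂ] A) (mulStep A A)))
    ∘ₗ (comul4 A)


/-!
`B` is the right action `c ↼ φ = φ(c₁) • c₂` of `φ = χ ∘ μ₄` on the coalgebra `A ⊗ A ⊗ A ⊗ A`,
where `μ₄ (x₁ ⊗ x₂ ⊗ x₃ ⊗ x₄) = x₁ x₂ x₃ x₄` is a coalgebra map because `A` is a bialgebra.
By coassociativity `(c ↼ g) ↼ f = c ↼ (g * f)` for the convolution product, and
`φ * φ = (χ * χ) ∘ μ₄`, so everything reduces to `χ * χ = n • χ`.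
Now `(χ * χ)(c)` is the trace of left multiplication by `Δc` on `A ⊗ A`, and the fusion map
`a ⊗ b ↦ a₁ ⊗ a₂ b` (invertible, with inverse `a ⊗ b ↦ a₁ ⊗ S(a₂) b`) conjugates it to
`L_c ⊗ id`, whose trace is `n χ(c)`.
-/

open Coalgebra (comul)
open scoped Coalgebra
open WithConv

lemma pow_eq_pow_sub_one_smul_of_mul_self_eq_smul {S M : Type*} [Monoid S] [Monoid M]
    [MulAction S M] [IsScalarTower S M M] {c : S} {a : M} (h : a * a = c • a) {k : ℕ}
    (hk : 1 ≤ k) : a ^ k = c ^ (k - 1) • a := by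
  induction k, hk using Nat.le_induction with
  | base => simp
  | succ k hk ih =>
    rw [pow_succ, ih, smul_mul_assoc, h, smul_smul, pow_sub_one_mul (by omega), Nat.add_sub_cancel]

section ConvolutionAction

variable {R C : Type*} [CommSemiring R] [AddCommMonoid C] [Module R C] [Coalgebra R C]

def rightHit (f : WithConv (C →ₗ[R] R)) : Module.End R C :=
  (TensorProduct.lid R C).toLinearMap ∘ₗ f.ofConv.rTensor C ∘ₗ comul

lemma rightHit_mul_rightHit (f g : WithConv (C →ₗ[R] R)) :
    rightHit f * rightHit g = rightHit (g * f) := by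
  ext c
  let 𝓡 := ℛ R c
  have coassoc := Coalgebra.sum_tmul_tmul_eq 𝓡 (fun i ↦ ℛ R (𝓡.left i)) (fun i ↦ ℛ R (𝓡.right i))
  replace coassoc := congr((TensorProduct.lid R C).toLinearMap
    (map g.ofConv ((TensorProduct.lid R C).toLinearMap ∘ₗ f.ofConv.rTensor C) $coassoc))
  simp only [map_sum, map_tmul, LinearMap.comp_apply, LinearMap.rTensor_tmul,
    LinearEquiv.coe_coe, TensorProduct.lid_tmul] at coassoc
  simpa [rightHit, ← 𝓡.eq, ← (ℛ R (𝓡.right _)).eq, (ℛ R (𝓡.left _)).convMul_apply,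
    Finset.sum_smul, Finset.smul_sum, mul_smul] using coassoc.symm

lemma rightHit_smul (r : R) (f : WithConv (C →ₗ[R] R)) : rightHit (r • f) = r • rightHit f := by
  ext c
  simp [rightHit, LinearMap.rTensor_smul]

lemma convMul_comp_coalgHom_eq_smul {D : Type*} [AddCommMonoid D] [Module R D] [Coalgebra R D]
    {f : D →ₗ[R] R} {r : R} (hf : toConv f * toConv f = r • toConv f) (h : C →ₗc[R] D) :
    toConv (f ∘ₗ h) * toConv (f ∘ₗ h) = r • toConv (f ∘ₗ (h : C →ₗ[R] D)) := by
  have := LinearMap.convMul_comp_coalgHom_distrib (toConv f) (toConv f) h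
  rw [hf] at this
  exact WithConv.ext this.symm

end ConvolutionAction

section Fusion

variable {R C A : Type*} [CommSemiring R] [AddCommMonoid C] [Module R C] [Coalgebra R C]
  [Semiring A] [Algebra R A]

def fusionMap (g : WithConv (C →ₗ[R] A)) : Module.End R (C ⊗[R] A) :=
  (LinearMap.mul' R A ∘ₗ g.ofConv.rTensor A).lTensor C ∘ₗ
    (TensorProduct.assoc R C C A).toLinearMap ∘ₗ comul.rTensor A

lemma fusionMap_tmul {ι : Type*} {c : C} (𝓡 : Coalgebra.Repr R c ι) (g : WithConv (C →ₗ[R] A))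
    (a : A) : fusionMap g (c ⊗ₜ a) = ∑ i ∈ 𝓡.index, 𝓡.left i ⊗ₜ (g (𝓡.right i) * a) := by
  simp [fusionMap, ← 𝓡.eq, sum_tmul]

lemma fusionMap_mul (f g : WithConv (C →ₗ[R] A)) :
    fusionMap (f * g) = fusionMap f * fusionMap g := by
  ext c a
  let 𝓡 := ℛ R c
  have coassoc := Coalgebra.sum_tmul_tmul_eq 𝓡 (fun i ↦ ℛ R (𝓡.left i)) (fun i ↦ ℛ R (𝓡.right i))
  replace coassoc := congr((LinearMap.mulRight R a ∘ₗ LinearMap.mul' R A ∘ₗ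
    map f.ofConv g.ofConv).lTensor C $coassoc)
  simp only [map_sum, LinearMap.lTensor_tmul, LinearMap.comp_apply, map_tmul,
    LinearMap.mul'_apply, LinearMap.mulRight_apply, mul_assoc] at coassoc
  simpa [fusionMap_tmul 𝓡, fusionMap_tmul (ℛ R (𝓡.left _)), (ℛ R (𝓡.right _)).convMul_apply,
    Finset.sum_mul, tmul_sum, mul_assoc] using coassoc.symm

lemma fusionMap_one : fusionMap (1 : WithConv (C →ₗ[R] A)) = 1 := by
  ext c a
  have counit := congr((LinearMap.mulRight R a ∘ₗ Algebra.linearMap R A).lTensor C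
    $(Coalgebra.sum_tmul_counit_eq (ℛ R c)))
  simp only [map_sum, LinearMap.lTensor_tmul, LinearMap.comp_apply, Algebra.linearMap_apply,
    LinearMap.mulRight_apply, map_one, one_mul] at counit
  simpa [fusionMap_tmul (ℛ R c)] using counit

variable (R C A) in
def fusionMapHom : WithConv (C →ₗ[R] A) →* Module.End R (C ⊗[R] A) where
  toFun := fusionMap
  map_one' := fusionMap_one
  map_mul' := fusionMap_mul

lemma fusionMap_id_tmul {H : Type*} [Semiring H] [Algebra R H] [Coalgebra R H] (a b : H) :
    fusionMap (toConv LinearMap.id) (a ⊗ₜ[R] b) = comul a * (1 ⊗ₜ b) := by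
  simp [fusionMap_tmul (ℛ R a), ← (ℛ R a).eq, Finset.sum_mul]

lemma mul_comul_mul_fusionMap_id {H : Type*} [Semiring H] [Bialgebra R H] (c : H) :
    LinearMap.mul R (H ⊗[R] H) (comul c) * fusionMap (toConv LinearMap.id) =
      fusionMap (toConv LinearMap.id) * (LinearMap.mul R H c).rTensor H := by
  ext a b
  simp [fusionMap_id_tmul, Bialgebra.comul_mul, mul_assoc]

variable (R) in
def fusionUnit (H : Type*) [Semiring H] [HopfAlgebra R H] : (Module.End R (H ⊗[R] H))ˣ :=
  Units.map (fusionMapHom R H H)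
    ⟨toConv LinearMap.id, toConv (antipode R), LinearMap.id_mul_antipode, LinearMap.antipode_mul_id⟩

end Fusion

section Trace

variable {R : Type*} [CommRing R]

lemma trace_comp_mul_tensorProduct (A B : Type*) [Ring A] [Algebra R A] [Ring B] [Algebra R B]
    [Module.Free R A] [Module.Finite R A] [Module.Free R B] [Module.Finite R B] :
    LinearMap.trace R (A ⊗[R] B) ∘ₗ LinearMap.mul R (A ⊗[R] B) =
      LinearMap.mul' R R ∘ₗ map (LinearMap.trace R A ∘ₗ LinearMap.mul R A)
        (LinearMap.trace R B ∘ₗ LinearMap.mul R B) := by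
  ext a b
  have : LinearMap.mul R (A ⊗[R] B) (a ⊗ₜ b) =
      map (LinearMap.mul R A a) (LinearMap.mul R B b) := by
    ext; simp
  simp [this, LinearMap.trace_tensorProduct']

variable {H : Type*} [Ring H] [HopfAlgebra R H] [Module.Free R H] [Module.Finite R H]

lemma trace_mul_comul (c : H) :
    LinearMap.trace R (H ⊗[R] H) (LinearMap.mul R (H ⊗[R] H) (comul c)) =
      Module.finrank R H * LinearMap.trace R H (LinearMap.mul R H c) := by
  have conj : LinearMap.mul R (H ⊗[R] H) (comul c) =
      fusionUnit R H * (LinearMap.mul R H c).rTensor H * ↑(fusionUnit R H)⁻¹ := by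
    rw [Units.eq_mul_inv_iff_mul_eq]
    exact mul_comul_mul_fusionMap_id c
  rw [conj, LinearMap.trace_conj, LinearMap.rTensor, LinearMap.trace_tensorProduct',
    LinearMap.trace_id, mul_comm]

lemma convMul_trace_comp_mul :
    toConv (LinearMap.trace R H ∘ₗ LinearMap.mul R H) *
        toConv (LinearMap.trace R H ∘ₗ LinearMap.mul R H) =
      (Module.finrank R H : R) • toConv (LinearMap.trace R H ∘ₗ LinearMap.mul R H) := by
  ext c
  have := LinearMap.congr_fun (trace_comp_mul_tensorProduct (R := R) H H) (comul c)
  simp only [LinearMap.comp_apply] at this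
  simp [← this, trace_mul_comul]

end Trace

def mul4 (R H : Type*) [CommSemiring R] [Semiring H] [Bialgebra R H] :
    H ⊗[R] (H ⊗[R] (H ⊗[R] H)) →ₗc[R] H :=
  (Bialgebra.mulCoalgHom R H).comp <| Coalgebra.TensorProduct.map (CoalgHom.id R H) <|
    (Bialgebra.mulCoalgHom R H).comp <| Coalgebra.TensorProduct.map (CoalgHom.id R H) <|
      Bialgebra.mulCoalgHom R H

lemma plaquetteOp_eq_rightHit (A : Type*) [Ring A] [HopfAlgebra ℂ A] :
    plaquetteOp A = rightHit (toConv (traceChar A ∘ₗ (mul4 ℂ A : T4 A →ₗ[ℂ] A))) := by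
  -- both sides factor through `comul4`; the remaining maps agree on pure tensors
  unfold plaquetteOp rightHit
  simp only [LinearMap.rTensor_comp, LinearMap.comp_assoc]
  congr 2
  simp only [TensorProduct.comul_def, AlgebraTensorModule.map_eq,
    AlgebraTensorModule.tensorTensorTensorComm_eq, comul4, ← LinearMap.lTensor_comp_map]
  simp only [← LinearMap.comp_assoc]
  congr 1
  ext
  simp [mulStep, mul4]

theorem plaquetteOp_pow_general (A : Type*) [Ring A] [HopfAlgebra ℂ A] [FiniteDimensional ℂ A] :
    (∀ k : ℕ, 1 ≤ k →
      (plaquetteOp A : Module.End ℂ (T4 A)) ^ k =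
        ((Module.finrank ℂ A : ℂ) ^ (k - 1)) • plaquetteOp A) ∧
    plaquetteOp A ∘ₗ plaquetteOp A = (Module.finrank ℂ A : ℂ) • plaquetteOp A := by
  have hχ : toConv (traceChar A) * toConv (traceChar A) =
      (Module.finrank ℂ A : ℂ) • toConv (traceChar A) :=
    convMul_trace_comp_mul
  have hB : plaquetteOp A * plaquetteOp A = (Module.finrank ℂ A : ℂ) • plaquetteOp A := by
    rw [plaquetteOp_eq_rightHit, rightHit_mul_rightHit, convMul_comp_coalgHom_eq_smul hχ,
      rightHit_smul]
  exact ⟨fun k hk ↦ pow_eq_pow_sub_one_smul_of_mul_self_eq_smul hB hk, hB⟩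

theorem plaquetteOp_pow (A : Type*) [Ring A] [HopfAlgebra ℂ A] [FiniteDimensional ℂ A]
    (hinv : ∀ a : A, antipode (R := ℂ) (antipode (R := ℂ) a) = a) :
    (∀ k : ℕ, 1 ≤ k →
      (plaquetteOp A : Module.End ℂ (T4 A)) ^ k =
        ((Module.finrank ℂ A : ℂ) ^ (k - 1)) • plaquetteOp A) ∧
    plaquetteOp A ∘ₗ plaquetteOp A = (Module.finrank ℂ A : ℂ) • plaquetteOp A :=
  plaquetteOp_pow_general A

end
end

section
/- Let A be a finite-dimensional involutory Hopf algebra over ℂ with n = dim_ℂ A, and let λ ∈ A satisfy a·λ = ε(a)·λ for all a ∈ A (λ is a left integral in A) and χ(λ) = n. Then the λ-colored plaquette operator B_λ on A⊗A⊗A⊗A, defined by B_λ(x₁ ⊗ x₂ ⊗ x₃ ⊗ x₄) = ∑ χ(λ·x₁₍₁₎x₂₍₁₎x₃₍₁₎x₄₍₁₎) x₁₍₂₎ ⊗ x₂₍₂₎ ⊗ x₃₍₂₎ ⊗ x₄₍₂₎, equals n times the identity map of A⊗A⊗A⊗A. -/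
/-!
STATEMENT 7: For a finite-dimensional involutory Hopf algebra A over ℂ with n = dim_ℂ A
and λ ∈ A a left integral (a·λ = ε(a)·λ) with χ(λ) = n, the λ-colored plaquette operator
  B_λ(x₁ ⊗ x₂ ⊗ x₃ ⊗ x₄) = ∑ χ(λ·x₁₍₁₎x₂₍₁₎x₃₍₁₎x₄₍₁₎) x₁₍₂₎ ⊗ x₂₍₂₎ ⊗ x₃₍₂₎ ⊗ x₄₍₂₎
equals n times the identity of A⊗A⊗A⊗A.
-/

open HopfAlgebra TensorProduct

noncomputable section

variable (A : Type*) [Ring A] [HopfAlgebra ℂ A]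

/-- The z-colored plaquette operator
`B_z(x₁ ⊗ x₂ ⊗ x₃ ⊗ x₄) = ∑ χ(z·x₁₍₁₎x₂₍₁₎x₃₍₁₎x₄₍₁₎) x₁₍₂₎ ⊗ x₂₍₂₎ ⊗ x₃₍₂₎ ⊗ x₄₍₂₎`. -/
def plaquetteOpCol (z : A) : T4 A →ₗ[ℂ] T4 A :=
  (TensorProduct.lid ℂ (T4 A)).toLinearMap
    ∘ₗ (LinearMap.rTensor (T4 A) ((traceChar A) ∘ₗ (LinearMap.mulLeft ℂ z)))
    ∘ₗ (mulStep A (A ⊗[ℂ] (A ⊗[ℂ] A)))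
    ∘ₗ (LinearMap.lTensor (A ⊗[ℂ] A) (mulStep A (A ⊗[ℂ] A)))
    ∘ₗ (LinearMap.lTensor (A ⊗[ℂ] A) (LinearMap.lTensor (A ⊗[ℂ] A) (mulStep A A)))
    ∘ₗ (comul4 A)


/-- Counit applied to the first factor: `a ⊗ b ↦ ε(a) • b`. -/
def counitFst (A : Type*) [Ring A] [HopfAlgebra ℂ A] : (A ⊗[ℂ] A) →ₗ[ℂ] A :=
  (TensorProduct.lid ℂ A).toLinearMap ∘ₗ LinearMap.rTensor A (Coalgebra.counit (R := ℂ))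

lemma counitFst_comp_comul (A : Type*) [Ring A] [HopfAlgebra ℂ A] :
    counitFst A ∘ₗ (Coalgebra.comul (R := ℂ)) = LinearMap.id := by
  ext x
  simp [counitFst, LinearMap.comp_apply, Coalgebra.rTensor_counit_comul]

lemma plaquette_struct (A : Type*) [Ring A] [HopfAlgebra ℂ A] :
    (TensorProduct.lid ℂ (T4 A)).toLinearMap
    ∘ₗ (LinearMap.rTensor (T4 A) (Coalgebra.counit (R := ℂ)))
    ∘ₗ (mulStep A (A ⊗[ℂ] (A ⊗[ℂ] A)))
    ∘ₗ (LinearMap.lTensor (A ⊗[ℂ] A) (mulStep A (A ⊗[ℂ] A)))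
    ∘ₗ (LinearMap.lTensor (A ⊗[ℂ] A) (LinearMap.lTensor (A ⊗[ℂ] A) (mulStep A A)))
    = TensorProduct.map (counitFst A) (TensorProduct.map (counitFst A)
        (TensorProduct.map (counitFst A) (counitFst A))) := by
  ext a b c d e f g h
  simp [mulStep, counitFst, tensorTensorTensorComm, smul_tmul, tmul_smul,
    Bialgebra.counit_mul, mul_smul]
  simp only [smul_smul]
  congr 1
  ring

lemma traceChar_mulLeft_integral (A : Type*) [Ring A] [HopfAlgebra ℂ A]
    [FiniteDimensional ℂ A]
    (lam : A) (hlam : ∀ a : A, a * lam = Coalgebra.counit (R := ℂ) a • lam) (x : A) :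
    traceChar A (lam * x) = (traceChar A lam) * Coalgebra.counit (R := ℂ) x := by
  have h2 : LinearMap.mulLeft ℂ (lam * x)
      = LinearMap.mulLeft ℂ lam ∘ₗ LinearMap.mulLeft ℂ x := by
    rw [LinearMap.mulLeft_mul]
  have h3 : LinearMap.mulLeft ℂ x ∘ₗ LinearMap.mulLeft ℂ lam
      = Coalgebra.counit (R := ℂ) x • LinearMap.mulLeft ℂ lam := by
    ext y
    simp only [LinearMap.comp_apply, LinearMap.mulLeft_apply, LinearMap.smul_apply]
    rw [← mul_assoc, hlam, smul_mul_assoc]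
  have h1 : LinearMap.mul ℂ A (lam * x) = LinearMap.mulLeft ℂ (lam * x) := rfl
  simp only [traceChar, LinearMap.comp_apply, h1, h2]
  rw [LinearMap.trace_comp_comm', h3, map_smul]
  rw [smul_eq_mul, mul_comm]; rfl

theorem plaquetteOp_cointegral_eq_smul_id
    (A : Type*) [Ring A] [HopfAlgebra ℂ A] [FiniteDimensional ℂ A]
    (hinv : ∀ a : A, antipode (R := ℂ) (antipode (R := ℂ) a) = a)
    (lam : A) (hlam : ∀ a : A, a * lam = Coalgebra.counit (R := ℂ) a • lam)
    (hchi : traceChar A lam = (Module.finrank ℂ A : ℂ)) :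
    plaquetteOpCol A lam = (Module.finrank ℂ A : ℂ) • (LinearMap.id : T4 A →ₗ[ℂ] T4 A) := by
  set n : ℂ := (Module.finrank ℂ A : ℂ)
  have hf : (traceChar A) ∘ₗ (LinearMap.mulLeft ℂ lam)
      = n • (Coalgebra.counit (R := ℂ) : A →ₗ[ℂ] ℂ) := by
    ext x
    simp only [LinearMap.comp_apply, LinearMap.mulLeft_apply, LinearMap.smul_apply,
      smul_eq_mul]
    rw [traceChar_mulLeft_integral A lam hlam x, hchi]
  rw [plaquetteOpCol, hf, LinearMap.rTensor_smul]
  simp only [LinearMap.comp_smul, LinearMap.smul_comp]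
  congr 1
  have := plaquette_struct A
  calc (TensorProduct.lid ℂ (T4 A)).toLinearMap
        ∘ₗ (LinearMap.rTensor (T4 A) (Coalgebra.counit (R := ℂ)))
        ∘ₗ (mulStep A (A ⊗[ℂ] (A ⊗[ℂ] A)))
        ∘ₗ (LinearMap.lTensor (A ⊗[ℂ] A) (mulStep A (A ⊗[ℂ] A)))
        ∘ₗ (LinearMap.lTensor (A ⊗[ℂ] A) (LinearMap.lTensor (A ⊗[ℂ] A) (mulStep A A)))
        ∘ₗ (comul4 A)
      = (TensorProduct.map (counitFst A) (TensorProduct.map (counitFst A)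
          (TensorProduct.map (counitFst A) (counitFst A)))) ∘ₗ (comul4 A) := by
        rw [← this]; rfl
    _ = LinearMap.id := by
        rw [comul4, ← TensorProduct.map_comp, ← TensorProduct.map_comp,
          ← TensorProduct.map_comp, counitFst_comp_comul, TensorProduct.map_id,
          TensorProduct.map_id, TensorProduct.map_id]


end
end
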